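/- Whitney-ball lower bound on hole size: in the setting of Lemma 5.1, for a ball B⁰_δ meeting E and 0 < ε < ρ_{δ,E}(B⁰_δ), let {B_δ(z_i,t_i)}_{i∈I} be the associated Whitney-type family covering F_δ(ε) (with dilation 5K_δ²/β) such that each i admits y_i ∈ B⁰_δ \ F_δ(ε) with δ(z_i,y_i) ≤ (13K_δ³/β)t_i. Then for every 0 < η ≤ β/(12K_δ³), the set I_η = {i : t_i ≥ ηε} is non-empty, and for every i ∈ I_η one has ρ_{δ,E}(B_δ(z_i,t_i)) ≥ Θ(η)·ε, where Θ(η) = [2K_δ/η + 26K_δ⁴/β]^{−log₂ C_{δ,E}}. -/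
import Mathlib


open MeasureTheory ENNReal Set

namespace WPA1

variable {X : Type*}

/-- `d` is a quasi-distance on `X` with triangular constant `K`. -/
def QD (d : X → X → ℝ) (K : ℝ) : Prop :=
  1 ≤ K ∧ (∀ x y, 0 ≤ d x y) ∧ (∀ x y, d x y = 0 ↔ x = y) ∧
    (∀ x y, d x y = d y x) ∧ ∀ x y z, d x z ≤ K * (d x y + d y z)

/-- The `d`-ball of center `x` and radius `r`. -/
def ball (d : X → X → ℝ) (x : X) (r : ℝ) : Set X := {y | d x y < r}

/-- The optimal (least) triangular constant of `d`. -/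
noncomputable def Kopt (d : X → X → ℝ) : ℝ := sInf {K | QD d K}

/-- Distance from a point to a set: `d(x,E) = inf_{e ∈ E} d(x,e)`. -/
noncomputable def distE (d : X → X → ℝ) (E : Set X) (x : X) : ℝ :=
  sInf ((d x) '' E)

/-- The maximal `E`-free hole function
`ρ_{d,E}(B_d(x,r)) = sup {0 < s ≤ 2Kr : ∃ y, B_d(y,s) ⊆ B_d(x,r) \ E}`
(with value `0` when the set is empty, by `Real.sSup` conventions). -/
noncomputable def hole (d : X → X → ℝ) (K : ℝ) (E : Set X) (x : X) (r : ℝ) : ℝ :=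
  sSup {s | 0 < s ∧ s ≤ 2 * K * r ∧ ∃ y, ball d y s ⊆ ball d x r \ E}

/-- The maximal hole function `ρ_{d,E}` is doubling with constant `C`. -/
def HoleDoubling (d : X → X → ℝ) (K : ℝ) (E : Set X) (C : ℝ) : Prop :=
  ∀ x r, 0 < r → hole d K E x (2 * r) ≤ C * hole d K E x r

/-- The `d`-balls are open and form neighborhood bases: the ambient topology is
the one induced by the quasi-distance `d`. -/
def BallsBasis [TopologicalSpace X] (d : X → X → ℝ) : Prop :=
  (∀ x r, IsOpen (ball d x r)) ∧ ∀ x, ∀ U ∈ nhds x, ∃ r > 0, ball d x r ⊆ U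

/-- The measure `μ` is doubling (with constant `A`) on `d`-balls, which have
positive finite measure; i.e. `(X,d,μ)` is a space of homogeneous type. -/
def DoublingBalls [MeasurableSpace X] (μ : Measure X) (d : X → X → ℝ) (A : ℝ) : Prop :=
  ∀ x r, 0 < r → 0 < μ (ball d x r) ∧ μ (ball d x r) < ⊤ ∧
    μ (ball d x (2 * r)) ≤ ENNReal.ofReal A * μ (ball d x r)

/-- `E` is `(σ,γ)`-weakly porous with respect to `d` and `μ`. -/
def WeaklyPorousWith [MeasurableSpace X] (μ : Measure X) (d : X → X → ℝ) (K : ℝ)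
    (E : Set X) (σ γ : ℝ) : Prop :=
  ∀ x r, 0 < r → ∃ (n : ℕ) (c : Fin n → X) (ρ : Fin n → ℝ),
    (∀ i j, i ≠ j → Disjoint (ball d (c i) (ρ i)) (ball d (c j) (ρ j))) ∧
    (∀ i, ball d (c i) (ρ i) ⊆ ball d x r \ E) ∧
    (∀ i, γ * hole d K E x r ≤ ρ i) ∧
    (∀ i, ρ i ≤ 2 * K * r) ∧
    ENNReal.ofReal σ * μ (ball d x r) ≤ ∑ i, μ (ball d (c i) (ρ i))

/-- `E` is weakly porous with respect to `d` and `μ`. -/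
def WeaklyPorous [MeasurableSpace X] (μ : Measure X) (d : X → X → ℝ) (K : ℝ)
    (E : Set X) : Prop :=
  ∃ σ γ : ℝ, σ ∈ Set.Ioo (0:ℝ) 1 ∧ γ ∈ Set.Ioo (0:ℝ) 1 ∧ WeaklyPorousWith μ d K E σ γ

/-- The weight `d(·,E)^{-α}`, valued in `ℝ≥0∞` (so it is `∞` on `{d(·,E)=0}`). -/
noncomputable def wgt (d : X → X → ℝ) (E : Set X) (α : ℝ) (x : X) : ℝ≥0∞ :=
  ENNReal.ofReal (distE d E x) ^ (-α)

/-- `w` is an `A₁(X,d,μ)`-weight: `w` is locally integrable and the mean value of `w`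
over every `d`-ball is bounded by a constant times its essential infimum there. -/
def MemA1 [MeasurableSpace X] (μ : Measure X) (d : X → X → ℝ) (w : X → ℝ≥0∞) : Prop :=
  (∀ x r, 0 < r → ∫⁻ y in ball d x r, w y ∂μ < ⊤) ∧
  ∃ C : ℝ, 0 < C ∧ ∀ x r, 0 < r →
    ∫⁻ y in ball d x r, w y ∂μ ≤
      ENNReal.ofReal C * essInf w (μ.restrict (ball d x r)) * μ (ball d x r)


section Aux

variable (d : X → X → ℝ) (K : ℝ) (E : Set X)

lemma hole_nonneg (x : X) (r : ℝ) : 0 ≤ hole d K E x r :=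
  Real.sSup_nonneg (fun _ hs => hs.1.le)

lemma hole_bdd (x : X) (r : ℝ) :
    BddAbove {s | 0 < s ∧ s ≤ 2 * K * r ∧ ∃ y, ball d y s ⊆ ball d x r \ E} :=
  ⟨2 * K * r, fun _ hs => hs.2.1⟩

lemma hole_mono {K : ℝ} (hK : 0 ≤ K) (x : X) {r r' : ℝ} (hr : r ≤ r') :
    hole d K E x r ≤ hole d K E x r' := by
  apply Real.sSup_le _ (hole_nonneg d K E x r')
  intro s hs
  apply le_csSup (hole_bdd d K E x r')
  refine ⟨hs.1, hs.2.1.trans (by nlinarith), ?_⟩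
  obtain ⟨y, hy⟩ := hs.2.2
  exact ⟨y, fun w hw => ⟨lt_of_lt_of_le (hy hw).1 hr, (hy hw).2⟩⟩

lemma hole_doubling_iter {K C : ℝ} (hC : 0 ≤ C) (hdbl : HoleDoubling d K E C)
    (x : X) {r : ℝ} (hr : 0 < r) : ∀ m : ℕ, hole d K E x (2 ^ m * r) ≤ C ^ m * hole d K E x r := by
  intro m
  induction m with
  | zero => simp
  | succ n ih =>
      have h1 : hole d K E x (2 ^ (n + 1) * r) ≤ C * hole d K E x (2 ^ n * r) := by
        have := hdbl x (2 ^ n * r) (by positivity)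
        calc hole d K E x (2 ^ (n + 1) * r) = hole d K E x (2 * (2 ^ n * r)) := by ring_nf
          _ ≤ C * hole d K E x (2 ^ n * r) := this
      calc hole d K E x (2 ^ (n + 1) * r) ≤ C * hole d K E x (2 ^ n * r) := h1
        _ ≤ C * (C ^ n * hole d K E x r) := by
            exact mul_le_mul_of_nonneg_left ih hC
        _ = C ^ (n + 1) * hole d K E x r := by ring

end Aux

/-- Whitney-ball lower bound on hole size: in the setting of Lemma 5.1, for every
`0 < η ≤ β/(12K_δ³)` the index set `I_η = {i : t_i ≥ ηε}` is non-empty, and for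
`i ∈ I_η` one has `ρ_{δ,E}(B_δ(z_i,t_i)) ≥ Θ(η) ε`, where
`Θ(η) = (2K_δ/η + 26K_δ⁴/β)^{-log₂ C_{δ,E}}`. -/
theorem statement19 {X : Type*} [TopologicalSpace X] [MeasurableSpace X] [BorelSpace X]
    (μ : Measure X) (δ : X → X → ℝ) (Kδ β C : ℝ) (hδ : QD δ Kδ)
    (hopen : ∀ x r, IsOpen (ball δ x r))
    (E : Set X) (hE : E.Nonempty)
    (hβ : β ∈ Set.Ioo (0:ℝ) 1) (hC : 1 < C) (hdbl : HoleDoubling δ Kδ E C)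
    (x₀ : X) (r₀ : ℝ) (hr₀ : 0 < r₀) (hmeet : (ball δ x₀ r₀ ∩ E).Nonempty)
    (ε : ℝ) (hε : 0 < ε) (hεsmall : ε < hole δ Kδ E x₀ r₀)
    (I : Type*) [Countable I] (z : I → X) (t : I → ℝ) (ht : ∀ i, 0 < t i)
    (hdisj : ∀ i j, i ≠ j → Disjoint (ball δ (z i) (t i)) (ball δ (z j) (t j)))
    (hsub : ∀ i, ball δ (z i) (t i) ⊆ {x ∈ ball δ x₀ r₀ | distE δ E x < ε})
    (hcov : {x ∈ ball δ x₀ r₀ | distE δ E x < ε} ⊆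
      ⋃ i, ball δ (z i) (5 * Kδ ^ 2 / β * t i))
    (hy : ∀ i, ∃ y ∈ ball δ x₀ r₀, ¬ distE δ E y < ε ∧
      δ (z i) y ≤ 13 * Kδ ^ 3 / β * t i)
    (hwhit : ∀ e ∈ E ∩ ball δ x₀ r₀, ∃ i,
      e ∈ ball δ (z i) (5 * Kδ ^ 2 / β * t i) ∧ ε ≤ 12 * Kδ ^ 3 / β * t i)
    (η : ℝ) (hη : 0 < η) (hη2 : η ≤ β / (12 * Kδ ^ 3)) :
    (∃ i, η * ε ≤ t i) ∧
    ∀ i, η * ε ≤ t i →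
      (2 * Kδ / η + 26 * Kδ ^ 4 / β) ^ (-(Real.logb 2 C)) * ε ≤
        hole δ Kδ E (z i) (t i) := by
  obtain ⟨hK1, hd0, hdeq, hdsymm, hdtri⟩ := hδ
  obtain ⟨hβ0, hβ1⟩ := hβ
  have hK0 : 0 < Kδ := lt_of_lt_of_le one_pos hK1
  have hK3 : (1:ℝ) ≤ Kδ ^ 3 := one_le_pow₀ hK1
  constructor
  · -- nonemptiness of I_η
    obtain ⟨e, heB, heE⟩ := hmeet
    obtain ⟨i, _, hi2⟩ := hwhit e ⟨heE, heB⟩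
    refine ⟨i, ?_⟩
    have h1 : η * ε ≤ β / (12 * Kδ ^ 3) * ε :=
      mul_le_mul_of_nonneg_right hη2 hε.le
    have h2 : β / (12 * Kδ ^ 3) * ε ≤ t i := by
      rw [div_mul_eq_mul_div, div_le_iff₀ (by positivity)]
      have := mul_le_mul_of_nonneg_left hi2 hβ0.le
      calc β * ε ≤ β * (12 * Kδ ^ 3 / β * t i) := this
        _ = t i * (12 * Kδ ^ 3) := by field_simp
    exact h1.trans h2
  · intro i hi
    -- constants
    set M : ℝ := Kδ / η + 13 * Kδ ^ 4 / β with hM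
    have hη' : η ≠ 0 := ne_of_gt hη
    have hβ' : β ≠ 0 := ne_of_gt hβ0
    have hM1 : 1 < M := by
      have : η < 1 := lt_of_le_of_lt hη2 (by rw [div_lt_one (by positivity)]; nlinarith)
      have h1 : 1 < Kδ / η := by rw [lt_div_iff₀ hη]; nlinarith
      have h2 : 0 < 13 * Kδ ^ 4 / β := by positivity
      rw [hM]; linarith
    have hM0 : 0 < M := lt_trans one_pos hM1
    obtain ⟨y, hyB, hyE, hyd⟩ := hy i
    have hyε : ε ≤ distE δ E y := le_of_not_gt hyE
    have hdist : ∀ e ∈ E, ε ≤ δ y e := by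
      intro e he
      refine hyε.trans (csInf_le ⟨0, ?_⟩ ⟨e, he, rfl⟩)
      rintro s ⟨a, _, rfl⟩; exact hd0 y a
    have htiη : ε ≤ t i / η := by
      rw [le_div_iff₀ hη]; linarith [hi, mul_comm η ε]
    -- ε belongs to the hole set at (z i, M * t i)
    have hεmem : ε ∈ {s | 0 < s ∧ s ≤ 2 * Kδ * (M * t i) ∧
        ∃ w, ball δ w s ⊆ ball δ (z i) (M * t i) \ E} := by
      refine ⟨hε, ?_, y, ?_⟩
      · have h1 : ε ≤ M * t i := by
          have h2 : t i / η ≤ Kδ / η * t i := by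
            rw [div_mul_eq_mul_div, div_le_div_iff₀ hη hη]
            nlinarith [mul_nonneg (mul_nonneg (sub_nonneg.mpr hK1) (ht i).le) hη.le]
          have h4 : 0 ≤ 13 * Kδ ^ 4 / β * t i := mul_nonneg (by positivity) (ht i).le
          rw [hM]; linarith
        nlinarith [mul_nonneg hM0.le (ht i).le]
      · intro w hw
        constructor
        · have h1 : δ (z i) w ≤ Kδ * (δ (z i) y + δ y w) := hdtri _ _ _
          have h2 : δ y w < ε := hw
          have h3 : δ (z i) y ≤ 13 * Kδ ^ 3 / β * t i := hyd
          have : δ (z i) w < Kδ * (13 * Kδ ^ 3 / β * t i + t i / η) := by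
            calc δ (z i) w ≤ Kδ * (δ (z i) y + δ y w) := h1
              _ < Kδ * (13 * Kδ ^ 3 / β * t i + t i / η) := by
                  apply mul_lt_mul_of_pos_left _ hK0
                  have := h2.trans_le htiη
                  linarith
          calc δ (z i) w < Kδ * (13 * Kδ ^ 3 / β * t i + t i / η) := this
            _ = M * t i := by rw [hM]; field_simp; ring
        · intro hwE
          exact absurd hw (not_lt.mpr (hdist w hwE))
    have hεhole : ε ≤ hole δ Kδ E (z i) (M * t i) :=
      le_csSup (hole_bdd δ Kδ E (z i) (M * t i)) hεmem
    -- choose m with M ≤ 2^m < 2M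
    set L : ℝ := Real.logb 2 C with hL
    have hL0 : 0 < L := Real.logb_pos one_lt_two hC
    set m : ℕ := ⌈Real.logb 2 M⌉₊ with hm
    have hlogM : 0 < Real.logb 2 M := Real.logb_pos one_lt_two hM1
    have hMle : M ≤ (2:ℝ) ^ m := by
      have h1 : Real.logb 2 M ≤ (m:ℝ) := Nat.le_ceil _
      have h2 : (2:ℝ) ^ Real.logb 2 M ≤ (2:ℝ) ^ (m:ℝ) :=
        Real.rpow_le_rpow_of_exponent_le (by norm_num) h1
      rwa [Real.rpow_logb two_pos (by norm_num) hM0, Real.rpow_natCast] at h2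
    have h2m : ((2:ℝ) ^ m : ℝ) ≤ 2 * M := by
      have h1 : (m:ℝ) ≤ Real.logb 2 M + 1 := by
        have := Nat.ceil_lt_add_one hlogM.le
        exact le_of_lt this
      have h2 : (2:ℝ) ^ (m:ℝ) ≤ (2:ℝ) ^ (Real.logb 2 M + 1) :=
        Real.rpow_le_rpow_of_exponent_le (by norm_num) h1
      rw [Real.rpow_natCast] at h2
      calc ((2:ℝ) ^ m : ℝ) ≤ (2:ℝ) ^ (Real.logb 2 M + 1) := h2
        _ = 2 * M := by
            rw [Real.rpow_add two_pos, Real.rpow_logb two_pos (by norm_num) hM0,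
              Real.rpow_one]; ring
    -- chain of inequalities
    have hchain : ε ≤ C ^ m * hole δ Kδ E (z i) (t i) := by
      have h1 : hole δ Kδ E (z i) (M * t i) ≤ hole δ Kδ E (z i) ((2:ℝ) ^ m * t i) :=
        hole_mono δ E hK0.le (z i)
          (mul_le_mul_of_nonneg_right hMle (ht i).le)
      have h2 := hole_doubling_iter δ E (le_of_lt (lt_trans one_pos hC)) hdbl (z i) (ht i) m
      linarith
    -- C ^ m ≤ (2M) ^ L
    have hCm : C ^ m ≤ (2 * M) ^ L := by
      have hCeq : C = (2:ℝ) ^ L := (Real.rpow_logb two_pos (by norm_num)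
        (lt_trans one_pos hC)).symm
      have h1 : (C:ℝ) ^ m = ((2:ℝ) ^ m) ^ L := by
        rw [hCeq, ← Real.rpow_natCast ((2:ℝ) ^ L) m, ← Real.rpow_mul two_pos.le,
          ← Real.rpow_natCast (2:ℝ) m, ← Real.rpow_mul two_pos.le, mul_comm]
      rw [h1]
      exact Real.rpow_le_rpow (by positivity) h2m hL0.le
    have h2M : 2 * Kδ / η + 26 * Kδ ^ 4 / β = 2 * M := by rw [hM]; ring
    rw [h2M]
    have hΘ : (2 * M) ^ (-L) * C ^ m ≤ 1 := by
      have h2M0 : (0:ℝ) < 2 * M := by linarith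
      have h1 : (2 * M) ^ (-L) * C ^ m ≤ (2 * M) ^ (-L) * (2 * M) ^ L := by
        apply mul_le_mul_of_nonneg_left hCm (Real.rpow_nonneg h2M0.le _)
      rwa [← Real.rpow_add h2M0, neg_add_cancel, Real.rpow_zero] at h1
    have hhole0 : 0 ≤ hole δ Kδ E (z i) (t i) := hole_nonneg δ Kδ E (z i) (t i)
    have hΘ0 : 0 ≤ (2 * M) ^ (-L) := Real.rpow_nonneg (by linarith) _
    calc (2 * M) ^ (-L) * ε ≤ (2 * M) ^ (-L) * (C ^ m * hole δ Kδ E (z i) (t i)) :=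
          mul_le_mul_of_nonneg_left hchain hΘ0
      _ = ((2 * M) ^ (-L) * C ^ m) * hole δ Kδ E (z i) (t i) := by ring
      _ ≤ 1 * hole δ Kδ E (z i) (t i) := mul_le_mul_of_nonneg_right hΘ hhole0
      _ = hole δ Kδ E (z i) (t i) := one_mul _

end WPA1
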